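/- Let X be a finite set, ≤ a partial order on X, and write ≰ := {(a,b) ∈ X × X | ¬(a ≤ b)}. Suppose C ⊆ ≰ is a set of cardinality k and F1, F2 ⊆ ≰ are Ferrers relations with F1 ∪ F2 ∪ C = ≰. Then there exist two linear extensions L1, L2 of ≤ such that |L1 ∩ L2| ≤ |≤| + k (where |≤| denotes the number of pairs (a,b) with a ≤ b). -/
import Mathlib


/-- A Ferrers relation on `X × X`: whenever `(a,b) ∈ F` and `(c,d) ∈ F`,
then `(a,d) ∈ F` or `(c,b) ∈ F`. -/
def IsFerrers {X : Type*} (F : Set (X × X)) : Prop :=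
  ∀ a c b d : X, (a, b) ∈ F → (c, d) ∈ F → (a, d) ∈ F ∨ (c, b) ∈ F

/-- A partial order given as a set of pairs: reflexive, antisymmetric, transitive. -/
def IsPartialOrderSet {X : Type*} (R : Set (X × X)) : Prop :=
  (∀ a : X, (a, a) ∈ R) ∧
  (∀ a b : X, (a, b) ∈ R → (b, a) ∈ R → a = b) ∧
  (∀ a b c : X, (a, b) ∈ R → (b, c) ∈ R → (a, c) ∈ R)

/-- A linear (total) order given as a set of pairs. -/
def IsLinearOrderSet {X : Type*} (R : Set (X × X)) : Prop :=
  IsPartialOrderSet R ∧ ∀ a b : X, (a, b) ∈ R ∨ (b, a) ∈ R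

/-- Key auxiliary lemma: if `F ⊆ ≰` is Ferrers, there is a linear extension of `le`
reversing every pair of `F`. -/
theorem ferrers_reversing_extension {X : Type*}
    (le F : Set (X × X)) (hle : IsPartialOrderSet le)
    (hF : IsFerrers F) (hFsub : F ⊆ leᶜ) :
    ∃ L : Set (X × X), IsLinearOrderSet L ∧ le ⊆ L ∧
      ∀ a b : X, (a, b) ∈ F → (b, a) ∈ L := by
  obtain ⟨hrefl, hanti, htrans⟩ := hle
  -- key Ferrers consequence
  have keyA : ∀ b a d c : X, (b, a) ∈ F → (d, c) ∈ F → (b, c) ∈ le → (d, a) ∈ F := by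
    intro b a d c h1 h2 hbc
    rcases hF b d a c h1 h2 with h | h
    · exact absurd hbc (hFsub h)
    · exact h
  -- the transitive closure of le ∪ F⁻¹
  set T : X → X → Prop := fun a b =>
    (a, b) ∈ le ∨ ∃ x y, (a, x) ∈ le ∧ (y, x) ∈ F ∧ (y, b) ∈ le with hT
  have Ttrans : ∀ a b c, T a b → T b c → T a c := by
    intro a b c hab hbc
    rcases hab with hab | ⟨x, y, hax, hyx, hyb⟩
    · rcases hbc with hbc | ⟨x, y, hbx, hyx, hyc⟩
      · exact Or.inl (htrans _ _ _ hab hbc)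
      · exact Or.inr ⟨x, y, htrans _ _ _ hab hbx, hyx, hyc⟩
    · rcases hbc with hbc | ⟨x', y', hbx', hyx', hyc⟩
      · exact Or.inr ⟨x, y, hax, hyx, htrans _ _ _ hyb hbc⟩
      · have hyx'le : (y, x') ∈ le := htrans _ _ _ hyb hbx'
        have : (y', x) ∈ F := keyA y x y' x' hyx hyx' hyx'le
        exact Or.inr ⟨x, y', hax, this, hyc⟩
  have Tanti : ∀ a b, T a b → T b a → a = b := by
    intro a b hab hba
    rcases hab with hab | ⟨x, y, hax, hyx, hyb⟩
    · rcases hba with hba | ⟨x, y, hbx, hyx, hya⟩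
      · exact hanti _ _ hab hba
      · exact absurd (htrans _ _ _ hya (htrans _ _ _ hab hbx)) (hFsub hyx)
    · rcases hba with hba | ⟨x', y', hbx', hyx', hya⟩
      · exact absurd (htrans _ _ _ hyb (htrans _ _ _ hba hax)) (hFsub hyx)
      · have : (y', x) ∈ F := keyA y x y' x' hyx hyx' (htrans _ _ _ hyb hbx')
        exact absurd (htrans _ _ _ hya hax) (hFsub this)
  have Trefl : ∀ a, T a a := fun a => Or.inl (hrefl a)
  haveI : IsPartialOrder X T :=
    { refl := Trefl
      trans := Ttrans
      antisymm := Tanti }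
  obtain ⟨s, hs, hTs⟩ := extend_partialOrder T
  haveI := hs
  refine ⟨{p | s p.1 p.2}, ⟨⟨fun a => refl_of s a, fun a b h h' => antisymm h h',
      fun a b c h h' => trans_of s h h'⟩, fun a b => total_of s a b⟩, ?_, ?_⟩
  · intro p hp
    exact hTs p.1 p.2 (Or.inl hp)
  · intro a b hab
    exact hTs b a (Or.inr ⟨b, a, hrefl b, hab, hrefl a⟩)

/-- Let `X` be finite, `≤` a partial order on `X`, `≰` its complement, `C ⊆ ≰` of
cardinality `k`, and `F1, F2 ⊆ ≰` Ferrers relations with `F1 ∪ F2 ∪ C = ≰`.  Then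
there are linear extensions `L1, L2` of `≤` with `|L1 ∩ L2| ≤ |≤| + k`. -/
theorem ferrers_cover_gives_small_realizer {X : Type*} [Finite X]
    (le : Set (X × X)) (hle : IsPartialOrderSet le)
    (C F1 F2 : Set (X × X)) (k : ℕ)
    (hC : C ⊆ leᶜ) (hk : C.ncard = k)
    (hF1 : IsFerrers F1) (hF2 : IsFerrers F2)
    (hF1sub : F1 ⊆ leᶜ) (hF2sub : F2 ⊆ leᶜ)
    (hcover : F1 ∪ F2 ∪ C = leᶜ) :
    ∃ L1 L2 : Set (X × X),
      IsLinearOrderSet L1 ∧ IsLinearOrderSet L2 ∧ le ⊆ L1 ∧ le ⊆ L2 ∧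
      (L1 ∩ L2).ncard ≤ le.ncard + k := by
  obtain ⟨L1, hL1, hleL1, hrev1⟩ := ferrers_reversing_extension le F1 hle hF1 hF1sub
  obtain ⟨L2, hL2, hleL2, hrev2⟩ := ferrers_reversing_extension le F2 hle hF2 hF2sub
  refine ⟨L1, L2, hL1, hL2, hleL1, hleL2, ?_⟩
  have hsub : L1 ∩ L2 ⊆ le ∪ C := by
    rintro ⟨a, b⟩ ⟨h1, h2⟩
    by_cases hab : (a, b) ∈ le
    · exact Or.inl hab
    · have : (a, b) ∈ F1 ∪ F2 ∪ C := hcover ▸ hab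
      rcases this with (hF | hF) | hF
      · have := hL1.1.2.1 a b h1 (hrev1 a b hF)
        subst this
        exact absurd (hle.1 a) hab
      · have := hL2.1.2.1 a b h2 (hrev2 a b hF)
        subst this
        exact absurd (hle.1 a) hab
      · exact Or.inr hF
  have hfin : (le ∪ C).Finite := Set.toFinite _
  calc (L1 ∩ L2).ncard ≤ (le ∪ C).ncard := Set.ncard_le_ncard hsub hfin
    _ ≤ le.ncard + C.ncard := Set.ncard_union_le le C
    _ = le.ncard + k := by rw [hk]
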